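/- arXiv:2106.01853 — 7 statements merged into one kernel-verified Lean document; each statement's English description precedes it below -/
import Mathlib

section
/- Let k be a perfect field with algebraic closure K, and let m, d ∈ ℕ. Let X ⊆ K^m be an algebraic set that is d-bounded (i.e. X = V(I) for some set I of polynomials over K of total degree at most d). If X is stable under the coordinatewise action of every field automorphism of K fixing k pointwise, then X is d-bounded over k. -/
/-!
Let `f` be a polynomial of degree `≤ d` vanishing on `X` with `f(a) ≠ 0`. Since `k` is perfect,
`K/k` is Galois, so the coefficients of `f` lie in a finite Galois extension `L/k` inside `K`.
For `c ∈ L` the polynomial `∑_{τ ∈ Gal(L/k)} τ(c) • τ̃(f)`, where `τ̃` extends `τ` to `K`, has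
the coefficients `Tr_{L/k}(c f_α) ∈ k`, degree `≤ d`, and vanishes on `X` because `X` is Galois
stable. Its value at `a` is `∑ τ(c) τ̃(f)(a)`; by Dedekind's independence of characters this cannot
vanish for every `c`, since the coefficient of `τ = 1` is `f(a) ≠ 0`.
-/

noncomputable section

/-- The zero set `V(I)` of a set `I` of multivariate polynomials over a field `K`. -/
def zeroSetK (K : Type) [Field K] {σ : Type} (I : Set (MvPolynomial σ K)) :
    Set (σ → K) :=
  {a | ∀ f ∈ I, MvPolynomial.eval a f = 0}

open MvPolynomial

namespace MvPolynomial

variable {ι R S : Type*} [CommSemiring R] [CommSemiring S]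

theorem eval_comp_map (φ : R →+* S) (b : ι → R) (f : MvPolynomial ι R) :
    eval (φ ∘ b) (map φ f) = φ (eval b f) := by
  rw [eval_map, eval, coe_eval₂Hom, eval₂_comp_left, RingHom.comp_id]

theorem totalDegree_map_le (φ : R →+* S) (f : MvPolynomial ι R) :
    (map φ f).totalDegree ≤ f.totalDegree :=
  Finset.sup_le fun _ hmo => le_totalDegree (support_map_subset φ f hmo)

end MvPolynomial

theorem eq_zero_of_forall_sum_mul_algebraMap_algEquiv_eq_zero {k L K : Type*} [Field k] [Field L]
    [Field K] [Algebra k L] [Algebra L K] [Fintype (L ≃ₐ[k] L)] {u : (L ≃ₐ[k] L) → K}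
    (h : ∀ c : L, ∑ τ, u τ * algebraMap L K (τ c) = 0) (τ : L ≃ₐ[k] L) : u τ = 0 := by
  let χ : (L ≃ₐ[k] L) → (L →* K) := fun τ => ((algebraMap L K).comp (τ : L →+* L)).toMonoidHom
  have hχ : Function.Injective χ := fun τ τ' hττ' =>
    AlgEquiv.ext fun c => (algebraMap L K).injective (DFunLike.congr_fun hττ' c)
  refine Fintype.linearIndependent_iff.1 ((linearIndependent_monoidHom L K).comp χ hχ) u ?_ τ
  funext c
  simpa [χ, mul_comm] using h c

theorem eval_map_algEquiv_eq_zero_of_stable {k K ι : Type*} [Field k] [Field K] [Algebra k K]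
    {X : Set (ι → K)}
    (hstab : ∀ σ : K ≃ₐ[k] K, ∀ a ∈ X, (fun i => σ (a i)) ∈ X) {f : MvPolynomial ι K}
    (hfX : ∀ b ∈ X, eval b f = 0) (σ : K ≃ₐ[k] K) {b : ι → K} (hb : b ∈ X) :
    eval b (map (σ : K →+* K) f) = 0 := by
  have hσb : b = (σ : K →+* K) ∘ fun i => σ.symm (b i) := by
    funext i; simp
  rw [hσb, eval_comp_map, hfX _ (hstab σ.symm b hb), map_zero]

section GaloisTrace

variable {k K ι : Type*} [Field k] [Field K] [Algebra k K] [Normal k K]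
  {L : IntermediateField k K}

theorem coeff_map_liftNormal {f : MvPolynomial ι K} (hf : ∀ mo, f.coeff mo ∈ L)
    (τ : L ≃ₐ[k] L) (mo : ι →₀ ℕ) :
    (map (τ.liftNormal K : K →+* K) f).coeff mo = τ ⟨f.coeff mo, hf mo⟩ := by
  rw [coeff_map]
  exact τ.liftNormal_commutes K ⟨f.coeff mo, hf mo⟩

variable (L) [FiniteDimensional k L]

/-- Since `τ.liftNormal K` extends `τ`, for `f` with coefficients in `L` this is the
coefficientwise trace `Tr_{L/k}(c • f)`. -/
def galoisTrace (f : MvPolynomial ι K) (c : L) : MvPolynomial ι K :=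
  ∑ τ : L ≃ₐ[k] L, (τ c : K) • map (τ.liftNormal K : K →+* K) f

variable {L}

theorem coeff_galoisTrace [IsGalois k L] {f : MvPolynomial ι K} (hf : ∀ mo, f.coeff mo ∈ L)
    (c : L) (mo : ι →₀ ℕ) :
    (galoisTrace L f c).coeff mo =
      algebraMap k K (Algebra.trace k L (c * ⟨f.coeff mo, hf mo⟩)) := by
  rw [IsScalarTower.algebraMap_apply k L K, trace_eq_sum_automorphisms, map_sum]
  simp [galoisTrace, coeff_sum, coeff_map_liftNormal hf]

theorem totalDegree_galoisTrace_le (f : MvPolynomial ι K) (c : L) :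
    (galoisTrace L f c).totalDegree ≤ f.totalDegree :=
  (totalDegree_finsetSum _ _).trans <| Finset.sup_le fun _ _ =>
    (totalDegree_smul_le _ _).trans (totalDegree_map_le _ _)

theorem eval_galoisTrace (f : MvPolynomial ι K) (c : L) (a : ι → K) :
    eval a (galoisTrace L f c) =
      ∑ τ : L ≃ₐ[k] L, (τ c : K) * eval a (map (τ.liftNormal K : K →+* K) f) := by
  simp [galoisTrace, smul_eval]

theorem eval_galoisTrace_eq_zero_of_stable {X : Set (ι → K)}
    (hstab : ∀ σ : K ≃ₐ[k] K, ∀ a ∈ X, (fun i => σ (a i)) ∈ X) {f : MvPolynomial ι K}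
    (hfX : ∀ b ∈ X, eval b f = 0) (c : L) {b : ι → K} (hb : b ∈ X) :
    eval b (galoisTrace L f c) = 0 := by
  rw [eval_galoisTrace]
  exact Finset.sum_eq_zero fun τ _ => by
    rw [eval_map_algEquiv_eq_zero_of_stable hstab hfX _ hb, mul_zero]

theorem exists_eval_galoisTrace_ne_zero {f : MvPolynomial ι K} (hf : ∀ mo, f.coeff mo ∈ L)
    {a : ι → K} (ha : eval a f ≠ 0) : ∃ c : L, eval a (galoisTrace L f c) ≠ 0 := by
  have hmap_one : map ((1 : L ≃ₐ[k] L).liftNormal K : K →+* K) f = f := by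
    ext mo
    rw [coeff_map_liftNormal hf]
    rfl
  by_contra! h
  refine ha (hmap_one ▸ eq_zero_of_forall_sum_mul_algebraMap_algEquiv_eq_zero
    (u := fun τ => eval a (map (τ.liftNormal K : K →+* K) f)) (fun c => ?_) 1)
  rw [← h c, eval_galoisTrace]
  exact Finset.sum_congr rfl fun _ _ => mul_comm _ _

end GaloisTrace

theorem exists_descended_of_eval_ne_zero {k K ι : Type*} [Field k] [Field K] [Algebra k K]
    [IsGalois k K] {X : Set (ι → K)} (hstab : ∀ σ : K ≃ₐ[k] K, ∀ a ∈ X, (fun i => σ (a i)) ∈ X)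
    {f : MvPolynomial ι K} (hfX : ∀ b ∈ X, eval b f = 0) {a : ι → K} (ha : eval a f ≠ 0) :
    ∃ g : MvPolynomial ι K, g.totalDegree ≤ f.totalDegree ∧
      (∀ mo, g.coeff mo ∈ Set.range (algebraMap k K)) ∧ (∀ b ∈ X, eval b g = 0) ∧
      eval a g ≠ 0 := by
  classical
  let L := FiniteGaloisIntermediateField.adjoin k (f.coeffs : Set K)
  have hf : ∀ mo, f.coeff mo ∈ L.toIntermediateField := fun mo => by
    by_cases h : f.coeff mo = 0
    · exact h ▸ zero_mem _
    · exact FiniteGaloisIntermediateField.subset_adjoin k _ (coeff_mem_coeffs mo h)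
  obtain ⟨c, hc⟩ := exists_eval_galoisTrace_ne_zero hf ha
  exact ⟨galoisTrace _ f c, totalDegree_galoisTrace_le f c,
    fun mo => coeff_galoisTrace hf c mo ▸ Set.mem_range_self _,
    fun b hb => eval_galoisTrace_eq_zero_of_stable hstab hfX c hb, hc⟩

/-- **Folklore Lemma, automorphism case**: let `k` be a perfect field with algebraic
closure `K`, and let `X ⊆ K^m` be an algebraic set that is `d`-bounded.  If `X` is stable
under the coordinatewise action of every automorphism of `K` fixing `k` pointwise, then
`X` is `d`-bounded over `k`. -/
theorem stmt4 (k K : Type) [Field k] [PerfectField k] [Field K] [Algebra k K]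
    [IsAlgClosure k K] (m d : ℕ) (X : Set (Fin m → K))
    (hX : ∃ I : Set (MvPolynomial (Fin m) K),
      X = zeroSetK K I ∧ ∀ f ∈ I, f.totalDegree ≤ d)
    (hstab : ∀ σ : K ≃ₐ[k] K, ∀ a ∈ X, (fun i => σ (a i)) ∈ X) :
    ∃ I : Set (MvPolynomial (Fin m) K), X = zeroSetK K I ∧
      ∀ f ∈ I, f.totalDegree ≤ d ∧ ∀ mo, f.coeff mo ∈ Set.range (algebraMap k K) := by
  have : IsGalois k K := {}
  obtain ⟨I, rfl, hI⟩ := hX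
  refine ⟨{g | g.totalDegree ≤ d ∧ (∀ mo, g.coeff mo ∈ Set.range (algebraMap k K)) ∧
      ∀ b ∈ zeroSetK K I, eval b g = 0}, ?_, fun g hg => ⟨hg.1, hg.2.1⟩⟩
  refine Set.Subset.antisymm (fun b hb g hg => hg.2.2 b hb) fun a ha f hf => ?_
  by_contra hfa
  obtain ⟨g, hgd, hgk, hgX, hga⟩ :=
    exists_descended_of_eval_ne_zero hstab (fun b hb => hb f hf) hfa
  exact hga (ha g ⟨hgd.trans (hI f hf), hgk, hgX⟩)
end
end

section
/- Let K be an algebraically closed field, k a subfield of K, and m, d ∈ ℕ. Let X ⊆ K^m be an algebraic set that is d-bounded (i.e. X = V(I) for some set I of polynomials over K of total degree at most d). If X ∩ k^m is Zariski-dense in X, that is, the smallest algebraic subset of K^m containing X ∩ k^m equals X, then X is d-bounded over k. -/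
noncomputable section

/-- The Zariski closure over `K`: the smallest algebraic set containing `Y`. -/
def zariskiClosureK (K : Type) [Field K] {σ : Type} (Y : Set (σ → K)) : Set (σ → K) :=
  zeroSetK K {f : MvPolynomial σ K | ∀ a ∈ Y, MvPolynomial.eval a f = 0}

/-!
Take as equations all polynomials of degree at most `d` with coefficients in `k` that vanish on
`X ∩ k^m`; by density they vanish on `X`. Conversely, expand each `f ∈ I` along a `k`-basis
`(b_j)` of `K` as `f = ∑ b_j f_j`, where `f_j` has the `j`-th coordinates of the coefficients of
`f` as coefficients. Each `f_j` has coefficients in `k` and degree at most `d`, and at a point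
`a ∈ k^m` the value `f_j(a)` is the `j`-th coordinate of `f(a)`, so `f_j` vanishes on `X ∩ k^m`.
Hence every common zero of the `f_j` is a zero of `f`.
-/

namespace MvPolynomial

variable {k R S σ : Type*} [CommSemiring k] [CommSemiring R] [CommSemiring S]

theorem addMonoidAlgebraMap_monomial (g : R →+ S) (s : σ →₀ ℕ) (c : R) :
    (AddMonoidAlgebra.map g (monomial s c) : MvPolynomial σ S) = monomial s (g c) := by
  classical
  ext u
  rw [coeff_addMonoidAlgebraMap, coeff_monomial, coeff_monomial]
  split_ifs <;> simp

theorem totalDegree_addMonoidAlgebraMap_le (g : R →+ S) (f : MvPolynomial σ R) :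
    totalDegree (AddMonoidAlgebra.map g f : MvPolynomial σ S) ≤ f.totalDegree := by
  refine Finset.sup_mono fun s hs => ?_
  rw [mem_support_iff, coeff_addMonoidAlgebraMap] at hs
  exact mem_support_iff.2 fun h => hs (by rw [h, map_zero])

variable [Algebra k R]

theorem eval_addMonoidAlgebraMap (φ : R →ₗ[k] R) {a : σ → R}
    (ha : ∀ i, a i ∈ Set.range (algebraMap k R)) (f : MvPolynomial σ R) :
    eval a (AddMonoidAlgebra.map (φ : R →+ R) f) = φ (eval a f) := by
  induction f using MvPolynomial.induction_on' with
  | monomial s c =>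
    obtain ⟨r, hr⟩ : ∃ r, algebraMap k R r = s.prod fun i e => a i ^ e :=
      prod_mem (S := (⊥ : Subalgebra k R)) fun i _ => pow_mem (ha i) _
    rw [addMonoidAlgebraMap_monomial, eval_monomial, eval_monomial, ← hr, mul_comm,
      ← Algebra.smul_def, mul_comm, ← Algebra.smul_def]
    exact (φ.map_smul r c).symm
  | add p q hp hq => rw [AddMonoidAlgebra.map_add, map_add, hp, hq, map_add, map_add]

theorem exists_finset_eq_sum_smul_addMonoidAlgebraMap_coord {ι : Type*}
    (b : Module.Basis ι k R) (f : MvPolynomial σ R) :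
    ∃ T : Finset ι, f = ∑ j ∈ T,
      b j • AddMonoidAlgebra.map ((Algebra.linearMap k R ∘ₗ b.coord j : R →ₗ[k] R) : R →+ R) f := by
  classical
  set T := f.support.biUnion fun s => (b.repr (f.coeff s)).support
  refine ⟨T, ?_⟩
  ext s
  have hsupp : (b.repr (f.coeff s)).support ⊆ T := by
    by_cases hs : s ∈ f.support
    · exact Finset.subset_biUnion_of_mem (fun s => (b.repr (f.coeff s)).support) hs
    · simp [notMem_support_iff.1 hs]
  conv_lhs => rw [← b.linearCombination_repr (f.coeff s), Finsupp.linearCombination_apply,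
    Finsupp.sum_of_support_subset _ hsupp _ fun j _ => zero_smul k (b j)]
  rw [coeff_sum]
  refine Finset.sum_congr rfl fun j _ => ?_
  rw [coeff_smul, coeff_addMonoidAlgebraMap, smul_eq_mul, Algebra.smul_def, mul_comm]
  rfl

end MvPolynomial

open MvPolynomial

theorem stmt5_general (K : Type) [Field K] (k : Subfield K) (m d : ℕ)
    (X : Set (Fin m → K))
    (hX : ∃ I : Set (MvPolynomial (Fin m) K),
      X = zeroSetK K I ∧ ∀ f ∈ I, f.totalDegree ≤ d)
    (hdense : zariskiClosureK K (X ∩ {a | ∀ i, a i ∈ k}) = X) :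
    ∃ I : Set (MvPolynomial (Fin m) K), X = zeroSetK K I ∧
      ∀ f ∈ I, f.totalDegree ≤ d ∧ ∀ mo, f.coeff mo ∈ k := by
  obtain ⟨I, rfl, hId⟩ := hX
  refine ⟨{g | g.totalDegree ≤ d ∧ (∀ s, g.coeff s ∈ k) ∧
      ∀ y ∈ zeroSetK K I ∩ {a | ∀ i, a i ∈ k}, eval y g = 0},
    subset_antisymm (fun a ha g hg => ?_) (fun a ha f hf => ?_), fun g hg => ⟨hg.1, hg.2.1⟩⟩
  · rw [← hdense] at ha
    exact ha g hg.2.2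
  · obtain ⟨T, hfT⟩ :=
      exists_finset_eq_sum_smul_addMonoidAlgebraMap_coord (Module.Basis.ofVectorSpace k K) f
    rw [hfT, map_sum]
    refine Finset.sum_eq_zero fun j _ => ?_
    rw [smul_eval, ha _ ⟨?_, fun s => ?_, fun y hy => ?_⟩, mul_zero]
    · exact (totalDegree_addMonoidAlgebraMap_le _ f).trans (hId f hf)
    · exact SetLike.coe_mem _
    · rw [eval_addMonoidAlgebraMap _ (a := y) fun i => ⟨⟨y i, hy.2 i⟩, rfl⟩, hy.1 f hf, map_zero]

/-- **Folklore Lemma, density case**: let `K` be an algebraically closed field, `k` a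
subfield, and `X ⊆ K^m` a `d`-bounded algebraic set.  If `X ∩ k^m` is Zariski-dense in
`X`, then `X` is `d`-bounded over `k`. -/
theorem stmt5 (K : Type) [Field K] [IsAlgClosed K] (k : Subfield K) (m d : ℕ)
    (X : Set (Fin m → K))
    (hX : ∃ I : Set (MvPolynomial (Fin m) K),
      X = zeroSetK K I ∧ ∀ f ∈ I, f.totalDegree ≤ d)
    (hdense : zariskiClosureK K (X ∩ {a | ∀ i, a i ∈ k}) = X) :
    ∃ I : Set (MvPolynomial (Fin m) K), X = zeroSetK K I ∧
      ∀ f ∈ I, f.totalDegree ≤ d ∧ ∀ mo, f.coeff mo ∈ k :=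
  stmt5_general K k m d X hX hdense
end
end

section
/- Let n ∈ ℕ and let G be a closed subgroup of GL_n(ℚ̄) that is defined over ℚ, i.e. G = V(I) for some set I of polynomials with rational coefficients. Then the Zariski closure U := Zcl(⟨{g ∈ G : g is unipotent}⟩) of the subgroup of G generated by the unipotent elements of G is an irreducible algebraic set: U is nonempty and U cannot be written as a union X₁ ∪ X₂ of two algebraic sets with X₁ ≠ U and X₂ ≠ U. -/
noncomputable section

open scoped MatrixGroups
open MvPolynomial

/-- The field of algebraic numbers. -/
abbrev Qbar : Type := AlgebraicClosure ℚ

/-- The zero set `V(I)` of a set `I` of multivariate polynomials over `ℚ̄`. -/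
def zeroSet {σ : Type} (I : Set (MvPolynomial σ Qbar)) : Set (σ → Qbar) :=
  {a | ∀ f ∈ I, MvPolynomial.eval a f = 0}

/-- A subset of affine space over `ℚ̄` is an algebraic set if it is a zero set. -/
def IsAlgebraicSet {σ : Type} (X : Set (σ → Qbar)) : Prop :=
  ∃ I : Set (MvPolynomial σ Qbar), X = zeroSet I

/-- The Zariski closure: the smallest algebraic set containing `Y`. -/
def zariskiClosure {σ : Type} (Y : Set (σ → Qbar)) : Set (σ → Qbar) :=
  zeroSet {f : MvPolynomial σ Qbar | ∀ a ∈ Y, MvPolynomial.eval a f = 0}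

/-- `X` is `d`-bounded over `ℚ`: it is the zero set of a set of polynomials of total
degree at most `d` with rational coefficients. -/
def BoundedOverQ {σ : Type} (X : Set (σ → Qbar)) (d : ℕ) : Prop :=
  ∃ I : Set (MvPolynomial σ Qbar), X = zeroSet I ∧
    ∀ f ∈ I, f.totalDegree ≤ d ∧ ∀ m, f.coeff m ∈ Set.range (algebraMap ℚ Qbar)

/-- Coordinates for the affine space `ℚ̄^{n²+1}` in which `GL_n(ℚ̄)` is embedded. -/
abbrev glIdx (n : ℕ) : Type := (Fin n × Fin n) ⊕ Unit

/-- The point `(M, det(M)⁻¹)` of `ℚ̄^{n²+1}` associated to `g ∈ GL_n(ℚ̄)`. -/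
def glPoint {n : ℕ} (g : GL (Fin n) Qbar) : glIdx n → Qbar :=
  Sum.elim (fun p => (g : Matrix (Fin n) (Fin n) Qbar) p.1 p.2)
    (fun _ => ((g : Matrix (Fin n) (Fin n) Qbar).det)⁻¹)

/-- The matrix part of a point of `ℚ̄^{n²+1}`. -/
def pointMatrix {n : ℕ} (a : glIdx n → Qbar) : Matrix (Fin n) (Fin n) Qbar :=
  Matrix.of fun i j => a (Sum.inl (i, j))

/-- The height of a rational number `a/b` in lowest terms is `max |a| b`. -/
def ratHeight (q : ℚ) : ℕ := max q.num.natAbs q.den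

/-- `g` has rational entries, i.e. `g ∈ GL_n(ℚ)`. -/
def HasRatEntries {n : ℕ} (g : GL (Fin n) Qbar) : Prop :=
  ∀ i j, ∃ q : ℚ, (g : Matrix (Fin n) (Fin n) Qbar) i j = algebraMap ℚ Qbar q

/-- `g` has rational entries of height at most `h`. -/
def EntriesHeightLE {n : ℕ} (g : GL (Fin n) Qbar) (h : ℕ) : Prop :=
  ∀ i j, ∃ q : ℚ, (g : Matrix (Fin n) (Fin n) Qbar) i j = algebraMap ℚ Qbar q ∧ ratHeight q ≤ h

/-- A matrix `g` is unipotent if `(g - 1)^n = 0`. -/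
def IsUnipotent {n : ℕ} (g : GL (Fin n) Qbar) : Prop :=
  ((g : Matrix (Fin n) (Fin n) Qbar) - 1) ^ n = 0

/-- A matrix is semisimple if it is diagonalizable over `ℚ̄`. -/
def IsSemisimpleMat {n : ℕ} (M : Matrix (Fin n) (Fin n) Qbar) : Prop :=
  ∃ (P : GL (Fin n) Qbar) (dvec : Fin n → Qbar),
    M = (P : Matrix (Fin n) (Fin n) Qbar) * Matrix.diagonal dvec *
      ((P⁻¹ : GL (Fin n) Qbar) : Matrix (Fin n) (Fin n) Qbar)

/-- Iterated base-2 exponentiation: `iexp 0 x = x`, `iexp (k+1) x = 2 ^ iexp k x`. -/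
def iexp : ℕ → ℕ → ℕ
  | 0, x => x
  | k + 1, x => 2 ^ iexp k x


/-- `X` is defined over `ℚ`: it is the zero set of a set of polynomials with rational
coefficients. -/
def DefinedOverQ {σ : Type} (X : Set (σ → Qbar)) : Prop :=
  ∃ I : Set (MvPolynomial σ Qbar), X = zeroSet I ∧
    ∀ f ∈ I, ∀ m, f.coeff m ∈ Set.range (algebraMap ℚ Qbar)

/-- The Zariski closure of the subgroup generated by the unipotent elements of `G`. -/
def unipClosure (n : ℕ) (G : Subgroup (GL (Fin n) Qbar)) : Set (glIdx n → Qbar) :=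
  zariskiClosure (glPoint ''
    ((Subgroup.closure {g : GL (Fin n) Qbar | g ∈ G ∧ IsUnipotent g} :
      Subgroup (GL (Fin n) Qbar)) : Set (GL (Fin n) Qbar)))

/-!
For a unipotent `u` the power `u ^ m = ∑_{j<n} (m choose j) (u - 1) ^ j` is polynomial in `m`,
so words `u₁ ^ m₁ ⋯ u_k ^ m_k` in unipotent generators are polynomial in `(m₁, …, m_k) ∈ ℕ^k`,
and any two elements of the generated group `H` lie on a single such family. If `f * g` vanishes
on `H` and `f h₀ ≠ 0`, take a family through `h₀` and an arbitrary `h₁ ∈ H`: the pull-back of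
`f * g` vanishes on `ℕ^k`, hence is the zero polynomial, and since the pull-back of `f` is nonzero
that of `g` is zero, so `g h₁ = 0`. Thus the vanishing ideal of `H` is prime, and the Zariski
closure of a set with prime vanishing ideal is irreducible. All elements of `H` have determinant
`1`, so the coordinate `det⁻¹` of `GL_n` is the constant `1` on them.
-/

open MvPolynomial Pointwise

lemma MvPolynomial.mem_vanishingIdeal_iff_eval {k σ : Type*} [Field k] {Y : Set (σ → k)}
    {p : MvPolynomial σ k} : p ∈ vanishingIdeal k Y ↔ ∀ x ∈ Y, eval x p = 0 :=
  Iff.rfl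

section ZariskiClosure

variable {σ : Type}

lemma subset_zariskiClosure (Y : Set (σ → Qbar)) : Y ⊆ zariskiClosure Y :=
  fun _ ha _ hf => hf _ ha

lemma zariskiClosure_subset_zeroSet {Y : Set (σ → Qbar)} {I : Set (MvPolynomial σ Qbar)}
    (hI : I ⊆ vanishingIdeal Qbar Y) : zariskiClosure Y ⊆ zeroSet I :=
  fun _ ha f hf => ha f fun b hb => mem_vanishingIdeal_iff_eval.1 (hI hf) b hb

theorem zariskiClosure_irreducible_of_isPrime {Y : Set (σ → Qbar)}
    (hY : (vanishingIdeal Qbar Y).IsPrime) :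
    (zariskiClosure Y).Nonempty ∧
    ∀ X₁ X₂ : Set (σ → Qbar), IsAlgebraicSet X₁ → IsAlgebraicSet X₂ →
      zariskiClosure Y = X₁ ∪ X₂ → X₁ = zariskiClosure Y ∨ X₂ = zariskiClosure Y := by
  refine ⟨?_, ?_⟩
  · have hne : Y.Nonempty :=
      Set.nonempty_iff_ne_empty.2 fun h => hY.ne_top (h ▸ vanishingIdeal_empty)
    exact hne.mono (subset_zariskiClosure Y)
  rintro X₁ X₂ ⟨I₁, rfl⟩ ⟨I₂, rfl⟩ hU
  have exists_nonvanishing : ∀ I, zeroSet I ⊆ zariskiClosure Y → zeroSet I ≠ zariskiClosure Y →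
      ∃ f ∈ I, f ∉ vanishingIdeal Qbar Y := by
    intro I hsub hne
    by_contra! hI
    exact hne (hsub.antisymm (zariskiClosure_subset_zeroSet hI))
  by_contra! h
  obtain ⟨f₁, hf₁, hf₁Y⟩ := exists_nonvanishing I₁ (hU ▸ Set.subset_union_left) h.1
  obtain ⟨f₂, hf₂, hf₂Y⟩ := exists_nonvanishing I₂ (hU ▸ Set.subset_union_right) h.2
  have hmul : f₁ * f₂ ∈ vanishingIdeal Qbar Y := by
    refine mem_vanishingIdeal_iff_eval.2 fun y hy => ?_
    rcases hU ▸ subset_zariskiClosure Y hy with hy | hy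
    · simp [hy f₁ hf₁]
    · simp [hy f₂ hf₂]
  exact (hY.mem_or_mem hmul).elim hf₁Y hf₂Y

end ZariskiClosure

lemma MvPolynomial.eq_zero_of_eval_natCast_eq_zero {R ι : Type*} [CommRing R] [IsDomain R]
    [CharZero R] {p : MvPolynomial ι R} (h : ∀ m : ι → ℕ, eval (fun i => (m i : R)) p = 0) :
    p = 0 := by
  refine funext_set (fun _ => Set.range Nat.cast)
    (fun _ => Set.infinite_range_of_injective Nat.cast_injective) fun x hx => ?_
  choose m hm using fun i => hx i (Set.mem_univ i)
  obtain rfl : (fun i => (m i : R)) = x := _root_.funext hm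
  exact h m

section NatPoints

variable {σ ι κ : Type}

def natEval (m : ι → ℕ) : MvPolynomial ι Qbar →+* Qbar := eval fun i => (m i : Qbar)

lemma natEval_rename (f : ι → κ) (m : κ → ℕ) (p : MvPolynomial ι Qbar) :
    natEval m (rename f p) = natEval (m ∘ f) p :=
  eval_rename f _ p

lemma natEval_bind₁ (Φ : σ → MvPolynomial ι Qbar) (m : ι → ℕ) (f : MvPolynomial σ Qbar) :
    natEval m (bind₁ Φ f) = eval (fun c => natEval m (Φ c)) f :=
  eval₂Hom_bind₁ _ _ Φ f

def natPoints (Φ : σ → MvPolynomial ι Qbar) : Set (σ → Qbar) :=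
  Set.range fun m : ι → ℕ => fun c => natEval m (Φ c)

lemma bind₁_eq_zero_of_eval_natPoints {Φ : σ → MvPolynomial ι Qbar} {f : MvPolynomial σ Qbar}
    (hf : ∀ y ∈ natPoints Φ, eval y f = 0) : bind₁ Φ f = 0 :=
  eq_zero_of_eval_natCast_eq_zero fun m => (natEval_bind₁ Φ m f).trans (hf _ ⟨m, rfl⟩)

theorem isPrime_vanishingIdeal_of_natPoints {Y : Set (σ → Qbar)} (hY : Y.Nonempty)
    (hfam : ∀ y₀ ∈ Y, ∀ y₁ ∈ Y, ∃ (ι : Type) (Φ : σ → MvPolynomial ι Qbar),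
      natPoints Φ ⊆ Y ∧ y₀ ∈ natPoints Φ ∧ y₁ ∈ natPoints Φ) :
    (vanishingIdeal Qbar Y).IsPrime := by
  obtain ⟨y, hy⟩ := hY
  refine ⟨fun h => by simpa using (Ideal.eq_top_iff_one _).1 h y hy, fun {f g} hfg => ?_⟩
  by_contra! h
  simp only [mem_vanishingIdeal_iff_eval, not_forall] at h hfg
  obtain ⟨⟨y₀, hy₀, hf⟩, ⟨y₁, hy₁, hg⟩⟩ := h
  obtain ⟨ι, Φ, hΦY, ⟨m₀, rfl⟩, ⟨m₁, rfl⟩⟩ := hfam y₀ hy₀ y₁ hy₁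
  have hfg : bind₁ Φ f * bind₁ Φ g = 0 := by
    rw [← map_mul]
    exact bind₁_eq_zero_of_eval_natPoints fun y hy => hfg y (hΦY hy)
  rcases mul_eq_zero.1 hfg with h | h
  · exact hf (by rw [← natEval_bind₁, h, map_zero])
  · exact hg (by rw [← natEval_bind₁, h, map_zero])

end NatPoints

lemma one_add_pow_eq_sum_range_of_pow_eq_zero {R : Type*} [Semiring R] {N : R} {n : ℕ}
    (hN : N ^ n = 0) (m : ℕ) : (1 + N) ^ m = ∑ j ∈ Finset.range n, m.choose j • N ^ j := by
  have hchoose : ∀ j ≥ m + 1, m.choose j • N ^ j = 0 := fun j hj => by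
    rw [Nat.choose_eq_zero_of_lt hj, zero_smul]
  have hpow : ∀ j ≥ n, m.choose j • N ^ j = 0 := fun j hj => by
    rw [pow_eq_zero_of_le hj hN, smul_zero]
  rw [add_comm, (Commute.one_right N).add_pow,
    ← Finset.eventually_constant_sum hpow (Nat.le_add_left n (m + 1)),
    Finset.eventually_constant_sum hchoose (Nat.le_add_right (m + 1) n)]
  refine Finset.sum_congr rfl fun j _ => ?_
  rw [one_pow, mul_one, nsmul_eq_mul, Nat.cast_comm]

lemma Subgroup.units_val_image_mul_subset {M : Type*} [Monoid M] (H : Subgroup Mˣ) :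
    Units.val '' (H : Set Mˣ) * Units.val '' (H : Set Mˣ) ⊆ Units.val '' (H : Set Mˣ) := by
  rintro _ ⟨_, ⟨a, ha, rfl⟩, _, ⟨b, hb, rfl⟩, rfl⟩
  exact ⟨a * b, H.mul_mem ha hb, Units.val_mul a b⟩

section GeneralLinear

variable {n : ℕ}

namespace IsUnipotent

variable {u : GL (Fin n) Qbar}

lemma det_eq_one (hu : IsUnipotent u) : (u : Matrix (Fin n) (Fin n) Qbar).det = 1 := by
  have hnil : IsNilpotent (-((u : Matrix (Fin n) (Fin n) Qbar) - 1)) := IsNilpotent.neg ⟨n, hu⟩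
  have hchar := (Matrix.isNilpotent_charpoly_sub_pow_of_isNilpotent hnil).eq_zero
  rw [sub_eq_zero] at hchar
  have h := Matrix.eval_charpoly (-((u : Matrix (Fin n) (Fin n) Qbar) - 1)) 1
  rw [hchar] at h
  simpa using h.symm

lemma inv (hu : IsUnipotent u) : IsUnipotent u⁻¹ := by
  have hcomm : Commute (-((u⁻¹ : GL (Fin n) Qbar) : Matrix (Fin n) (Fin n) Qbar)) (u - 1) :=
    ((Commute.refl _).units_inv_left.sub_right (Commute.one_right _)).neg_left
  have hfactor : ((u⁻¹ : GL (Fin n) Qbar) : Matrix (Fin n) (Fin n) Qbar) - 1 =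
      -((u⁻¹ : GL (Fin n) Qbar) : Matrix (Fin n) (Fin n) Qbar) * (u - 1) := by
    rw [neg_mul, mul_sub, Units.inv_mul, mul_one, neg_sub]
  rw [IsUnipotent, hfactor, hcomm.mul_pow, hu, mul_zero]

lemma pow_eq_sum_choose (hu : IsUnipotent u) (m : ℕ) :
    ((u ^ m : GL (Fin n) Qbar) : Matrix (Fin n) (Fin n) Qbar) =
      ∑ j ∈ Finset.range n, (m.choose j : Qbar) • ((u : Matrix (Fin n) (Fin n) Qbar) - 1) ^ j := by
  rw [Units.val_pow_eq_pow_val, ← add_sub_cancel (1 : Matrix (Fin n) (Fin n) Qbar) u,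
    one_add_pow_eq_sum_range_of_pow_eq_zero hu]
  simp only [add_sub_cancel, Nat.cast_smul_eq_nsmul]

end IsUnipotent

section MatrixFamilies

variable {ι κ : Type}

def matrixNatPoints (Φ : Matrix (Fin n) (Fin n) (MvPolynomial ι Qbar)) :
    Set (Matrix (Fin n) (Fin n) Qbar) :=
  Set.range fun m : ι → ℕ => (natEval m).mapMatrix Φ

lemma matrixNatPoints_mul (Φ : Matrix (Fin n) (Fin n) (MvPolynomial ι Qbar))
    (Ψ : Matrix (Fin n) (Fin n) (MvPolynomial κ Qbar)) :
    matrixNatPoints (Φ.map (rename Sum.inl) * Ψ.map (rename Sum.inr)) =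
      matrixNatPoints Φ * matrixNatPoints Ψ := by
  have hinl : ∀ m : ι ⊕ κ → ℕ, (natEval m).mapMatrix (Φ.map (rename Sum.inl)) =
      (natEval (m ∘ Sum.inl)).mapMatrix Φ := fun m => by
    ext; simp [natEval_rename]
  have hinr : ∀ m : ι ⊕ κ → ℕ, (natEval m).mapMatrix (Ψ.map (rename Sum.inr)) =
      (natEval (m ∘ Sum.inr)).mapMatrix Ψ := fun m => by
    ext; simp [natEval_rename]
  ext A
  constructor
  · rintro ⟨m, rfl⟩
    dsimp only
    rw [map_mul, hinl, hinr]
    exact Set.mul_mem_mul ⟨_, rfl⟩ ⟨_, rfl⟩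
  · rintro ⟨_, ⟨m₁, rfl⟩, _, ⟨m₂, rfl⟩, rfl⟩
    exact ⟨Sum.elim m₁ m₂, by
      dsimp only
      rw [map_mul, hinl, hinr, Sum.elim_comp_inl, Sum.elim_comp_inr]⟩

def unipotentFamily (u : GL (Fin n) Qbar) : Matrix (Fin n) (Fin n) (MvPolynomial Unit Qbar) :=
  ∑ j ∈ Finset.range n,
    Ring.choose (X () : MvPolynomial Unit Qbar) j •
      (((u : Matrix (Fin n) (Fin n) Qbar) - 1) ^ j).map C

lemma IsUnipotent.matrixNatPoints_unipotentFamily {u : GL (Fin n) Qbar} (hu : IsUnipotent u) :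
    matrixNatPoints (unipotentFamily u) =
      Set.range fun k : ℕ => ((u ^ k : GL (Fin n) Qbar) : Matrix (Fin n) (Fin n) Qbar) := by
  have heval : ∀ m : Unit → ℕ, (natEval m).mapMatrix (unipotentFamily u) = ↑(u ^ m ()) := by
    intro m
    ext i j
    simp [hu.pow_eq_sum_choose, unipotentFamily, natEval, Matrix.sum_apply, Ring.map_choose,
      Ring.choose_natCast]
  ext A
  constructor
  · rintro ⟨m, rfl⟩
    exact ⟨m (), (heval m).symm⟩
  · rintro ⟨k, rfl⟩
    exact ⟨fun _ => k, heval _⟩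

def slPoint {R : Type*} [One R] (A : Matrix (Fin n) (Fin n) R) : glIdx n → R :=
  Sum.elim (fun p => A p.1 p.2) 1

lemma glPoint_eq_slPoint {g : GL (Fin n) Qbar} (hg : (g : Matrix (Fin n) (Fin n) Qbar).det = 1) :
    glPoint g = slPoint (g : Matrix (Fin n) (Fin n) Qbar) := by
  funext c
  rcases c with _ | _ <;> simp [glPoint, slPoint, hg]

lemma natPoints_slPoint (Φ : Matrix (Fin n) (Fin n) (MvPolynomial ι Qbar)) :
    natPoints (slPoint Φ) = slPoint '' matrixNatPoints Φ := by
  rw [natPoints, matrixNatPoints, ← Set.range_comp]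
  congr 1
  funext m c
  rcases c with _ | _ <;> simp [slPoint]

end MatrixFamilies

section UnipotentClosure

variable {S : Set (GL (Fin n) Qbar)}

lemma exists_unipotentFamily_of_mem {H : Subgroup (GL (Fin n) Qbar)} {u : GL (Fin n) Qbar}
    (hu : IsUnipotent u) (huH : u ∈ H) :
    ∃ (ι : Type) (Φ : Matrix (Fin n) (Fin n) (MvPolynomial ι Qbar)),
      matrixNatPoints Φ ⊆ Units.val '' (H : Set (GL (Fin n) Qbar)) ∧
        1 ∈ matrixNatPoints Φ ∧ (u : Matrix (Fin n) (Fin n) Qbar) ∈ matrixNatPoints Φ := by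
  refine ⟨Unit, unipotentFamily u, ?_, ?_, ?_⟩ <;> rw [hu.matrixNatPoints_unipotentFamily]
  · rintro _ ⟨k, rfl⟩
    exact ⟨u ^ k, pow_mem huH k, rfl⟩
  · exact ⟨0, by simp⟩
  · exact ⟨1, by simp⟩

lemma exists_matrixNatPoints_of_mem_closure (hS : ∀ s ∈ S, IsUnipotent s) {g : GL (Fin n) Qbar}
    (hg : g ∈ Subgroup.closure S) :
    ∃ (ι : Type) (Φ : Matrix (Fin n) (Fin n) (MvPolynomial ι Qbar)),
      matrixNatPoints Φ ⊆ Units.val '' (Subgroup.closure S : Set (GL (Fin n) Qbar)) ∧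
        1 ∈ matrixNatPoints Φ ∧ (g : Matrix (Fin n) (Fin n) Qbar) ∈ matrixNatPoints Φ := by
  induction hg using Subgroup.closure_induction'' with
  | mem s hs => exact exists_unipotentFamily_of_mem (hS s hs) (Subgroup.subset_closure hs)
  | inv_mem s hs =>
    exact exists_unipotentFamily_of_mem (hS s hs).inv (inv_mem (Subgroup.subset_closure hs))
  | one =>
    have hpoints : matrixNatPoints (1 : Matrix (Fin n) (Fin n) (MvPolynomial Unit Qbar)) = {1} := by
      simp only [matrixNatPoints, map_one, Set.range_const]
    refine ⟨Unit, 1, ?_, ?_, ?_⟩ <;> simp [hpoints]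
  | mul g₀ g₁ _ _ ih₀ ih₁ =>
    obtain ⟨ι₀, Φ₀, hΦ₀, one₀, mem₀⟩ := ih₀
    obtain ⟨ι₁, Φ₁, hΦ₁, one₁, mem₁⟩ := ih₁
    refine ⟨ι₀ ⊕ ι₁, Φ₀.map (rename Sum.inl) * Φ₁.map (rename Sum.inr), ?_, ?_, ?_⟩ <;>
      rw [matrixNatPoints_mul]
    · exact (Set.mul_subset_mul hΦ₀ hΦ₁).trans (Subgroup.units_val_image_mul_subset _)
    · exact mul_one (1 : Matrix (Fin n) (Fin n) Qbar) ▸ Set.mul_mem_mul one₀ one₁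
    · exact Units.val_mul g₀ g₁ ▸ Set.mul_mem_mul mem₀ mem₁

lemma det_eq_one_of_mem_closure (hS : ∀ s ∈ S, IsUnipotent s)
    {g : GL (Fin n) Qbar} (hg : g ∈ Subgroup.closure S) :
    (g : Matrix (Fin n) (Fin n) Qbar).det = 1 := by
  have hker : Subgroup.closure S ≤ Matrix.GeneralLinearGroup.det.ker :=
    (Subgroup.closure_le _).2 fun s hs => Units.ext (hS s hs).det_eq_one
  exact congrArg Units.val (hker hg)

theorem isPrime_vanishingIdeal_glPoint_closure (hS : ∀ s ∈ S, IsUnipotent s) :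
    (vanishingIdeal Qbar (glPoint '' (Subgroup.closure S : Set (GL (Fin n) Qbar)))).IsPrime := by
  have himage : glPoint '' (Subgroup.closure S : Set (GL (Fin n) Qbar)) =
      slPoint '' (Units.val '' (Subgroup.closure S : Set (GL (Fin n) Qbar))) := by
    rw [Set.image_image]
    exact Set.image_congr fun g hg => glPoint_eq_slPoint (det_eq_one_of_mem_closure hS hg)
  rw [himage]
  refine isPrime_vanishingIdeal_of_natPoints ⟨_, 1, ⟨1, one_mem _, rfl⟩, rfl⟩ ?_
  rintro _ ⟨_, ⟨g₀, hg₀, rfl⟩, rfl⟩ _ ⟨_, ⟨g₁, hg₁, rfl⟩, rfl⟩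
  obtain ⟨ι₀, Φ₀, hΦ₀, one₀, mem₀⟩ := exists_matrixNatPoints_of_mem_closure hS hg₀
  obtain ⟨ι₁, Φ₁, hΦ₁, one₁, mem₁⟩ := exists_matrixNatPoints_of_mem_closure hS hg₁
  refine ⟨ι₀ ⊕ ι₁, slPoint (Φ₀.map (rename Sum.inl) * Φ₁.map (rename Sum.inr)), ?_, ?_, ?_⟩ <;>
    rw [natPoints_slPoint, matrixNatPoints_mul]
  · exact Set.image_mono
      ((Set.mul_subset_mul hΦ₀ hΦ₁).trans (Subgroup.units_val_image_mul_subset _))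
  · exact Set.mem_image_of_mem _ (mul_one (g₀ : Matrix (Fin n) (Fin n) Qbar) ▸
      Set.mul_mem_mul mem₀ one₁)
  · exact Set.mem_image_of_mem _ (one_mul (g₁ : Matrix (Fin n) (Fin n) Qbar) ▸
      Set.mul_mem_mul one₀ mem₁)

end UnipotentClosure

end GeneralLinear

theorem stmt7_general (n : ℕ) (G : Subgroup (GL (Fin n) Qbar)) :
    (unipClosure n G).Nonempty ∧
    ∀ X₁ X₂ : Set (glIdx n → Qbar), IsAlgebraicSet X₁ → IsAlgebraicSet X₂ →
      unipClosure n G = X₁ ∪ X₂ → X₁ = unipClosure n G ∨ X₂ = unipClosure n G :=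
  zariskiClosure_irreducible_of_isPrime (isPrime_vanishingIdeal_glPoint_closure fun _ hg => hg.2)

/-- **Irreducibility of the unipotent-generated subgroup**: let `G` be a closed subgroup
of `GL_n(ℚ̄)` defined over `ℚ`.  Then `U = Zcl(⟨unipotent elements of G⟩)` is an
irreducible algebraic set: it is nonempty and is not the union of two algebraic proper
subsets. -/
theorem stmt7 (n : ℕ) (G : Subgroup (GL (Fin n) Qbar))
    (hG : DefinedOverQ (glPoint '' (G : Set (GL (Fin n) Qbar)))) :
    (unipClosure n G).Nonempty ∧
    ∀ X₁ X₂ : Set (glIdx n → Qbar), IsAlgebraicSet X₁ → IsAlgebraicSet X₂ →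
      unipClosure n G = X₁ ∪ X₂ → X₁ = unipClosure n G ∨ X₂ = unipClosure n G :=
  stmt7_general n G
end
end

section
/- Let n ≥ 1 and let g ∈ GL_n(ℚ) be an invertible matrix all of whose entries have height at most h. Then every entry of the inverse matrix g⁻¹ has height at most h^{n³+n²}·n!. -/
/-!
Let `D ≤ h^(n²)` be the product of the denominators of the entries of `g`. Then `N = D • g` is an
integer matrix with entries bounded by `D h`, and Cramer's rule gives `g⁻¹ = D • adj N / det N`.
Expanding determinants over permutations bounds `|det N|` by `n! (D h)^n` and, through the
`(n-1) × (n-1)` minors, `|D (adj N)ᵢⱼ|` by `D (n-1)! (D h)^(n-1) ≤ n! (D h)^n`. A fraction `a / b`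
has height at most `max |a| |b|`, and `(D h)^n ≤ h^(n³+n) ≤ h^(n³+n²)`.
-/

noncomputable section

open scoped MatrixGroups

lemma den_le_ratHeight (q : ℚ) : q.den ≤ ratHeight q := le_max_right _ _

lemma natAbs_num_le_ratHeight (q : ℚ) : q.num.natAbs ≤ ratHeight q := le_max_left _ _

lemma ratHeight_intCast_div_le {a b : ℤ} (hb : b ≠ 0) :
    ratHeight ((a : ℚ) / b) ≤ max a.natAbs b.natAbs := by
  rw [ratHeight, ← Rat.divInt_eq_div]
  refine max_le_max ?_ ?_
  · rcases eq_or_ne a 0 with rfl | ha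
    · simp
    · exact Int.natAbs_le_of_dvd_ne_zero (Rat.num_dvd a hb) ha
  · exact Int.natAbs_le_of_dvd_ne_zero (Rat.den_dvd a b) hb

namespace Matrix

lemma abv_adjugate_le {R S : Type*} [CommRing R] [Nontrivial R] [CommRing S] [LinearOrder S]
    [IsStrictOrderedRing S] {m : ℕ} {A : Matrix (Fin (m + 1)) (Fin (m + 1)) R}
    {abv : AbsoluteValue R S} {x : S} (hx : ∀ i j, abv (A i j) ≤ x) (i j : Fin (m + 1)) :
    abv (A.adjugate i j) ≤ m.factorial • x ^ m := by
  rw [adjugate_fin_succ_eq_det_submatrix, abv.map_mul, abv.map_pow, abv.map_neg, abv.map_one,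
    one_pow, one_mul]
  exact (det_le fun k l ↦ hx _ _).trans_eq (by rw [Fintype.card_fin])

lemma inv_map_intCast_apply {K n : Type*} [Field K] [Fintype n] [DecidableEq n]
    (N : Matrix n n ℤ) (i j : n) :
    (N.map ((↑) : ℤ → K))⁻¹ i j = (N.adjugate i j : K) / N.det := by
  have hadj : (N.map ((↑) : ℤ → K)).adjugate = N.adjugate.map (↑) :=
    ((Int.castRingHom K).map_adjugate N).symm
  rw [inv_def, hadj, ← Int.cast_det, Ring.inverse_eq_inv']
  simp [div_eq_inv_mul]

variable {m n : Type*} [Fintype m] [Fintype n]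

def commonDen (A : Matrix m n ℚ) : ℕ := ∏ i, ∏ j, (A i j).den

lemma den_dvd_commonDen (A : Matrix m n ℚ) (i : m) (j : n) : (A i j).den ∣ A.commonDen :=
  (Finset.dvd_prod_of_mem _ (Finset.mem_univ j)).trans
    (Finset.dvd_prod_of_mem (fun i ↦ ∏ j, (A i j).den) (Finset.mem_univ i))

lemma commonDen_le_pow {A : Matrix m n ℚ} {h : ℕ} (hA : ∀ i j, (A i j).den ≤ h) :
    A.commonDen ≤ h ^ (Fintype.card m * Fintype.card n) := by
  calc A.commonDen ≤ ∏ _i : m, ∏ _j : n, h :=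
        Finset.prod_le_prod' fun i _ ↦ Finset.prod_le_prod' fun j _ ↦ hA i j
    _ = h ^ (Fintype.card m * Fintype.card n) := by
        rw [Finset.prod_const, Finset.prod_const, Finset.card_univ, Finset.card_univ, ← pow_mul,
          mul_comm]

lemma commonDen_pos (A : Matrix m n ℚ) : 0 < A.commonDen :=
  Finset.prod_pos fun i _ ↦ Finset.prod_pos fun j _ ↦ (A i j).pos

def clearDen (A : Matrix m n ℚ) : Matrix m n ℤ :=
  of fun i j ↦ ((A.commonDen / (A i j).den : ℕ) : ℤ) * (A i j).num

lemma map_clearDen (A : Matrix m n ℚ) :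
    A.clearDen.map (Int.cast : ℤ → ℚ) = (A.commonDen : ℚ) • A := by
  ext i j
  have hden : ((A i j).den : ℚ) ≠ 0 := by exact_mod_cast (A i j).den_nz
  simp only [clearDen, map_apply, of_apply, smul_apply, smul_eq_mul, Int.cast_mul,
    Int.cast_natCast, Nat.cast_div (den_dvd_commonDen A i j) hden]
  rw [div_mul_eq_mul_div, mul_div_assoc, Rat.num_div_den]

lemma abs_clearDen_le {A : Matrix m n ℚ} {h : ℕ} (hA : ∀ i j, (A i j).num.natAbs ≤ h)
    (i : m) (j : n) :
    |A.clearDen i j| ≤ A.commonDen * h := by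
  have hquot : A.commonDen / (A i j).den ≤ A.commonDen := Nat.div_le_self _ _
  have hnum : |(A i j).num| ≤ h := by rw [Int.abs_eq_natAbs]; exact_mod_cast hA i j
  rw [clearDen, of_apply, abs_mul, Nat.abs_cast]
  gcongr

variable [DecidableEq n]

lemma det_clearDen (A : Matrix n n ℚ) :
    (A.clearDen.det : ℚ) = A.commonDen ^ Fintype.card n * A.det := by
  rw [← det_smul, ← map_clearDen, Int.cast_det]

lemma det_clearDen_ne_zero {A : Matrix n n ℚ} (hA : A.det ≠ 0) : A.clearDen.det ≠ 0 := by
  have hdet : (A.clearDen.det : ℚ) ≠ 0 := by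
    rw [det_clearDen]
    exact mul_ne_zero (pow_ne_zero _ (by exact_mod_cast A.commonDen_pos.ne')) hA
  exact_mod_cast hdet

lemma inv_apply_eq_div_det_clearDen {A : Matrix n n ℚ} (hA : IsUnit A.det) (i j : n) :
    A⁻¹ i j = ((A.commonDen * A.clearDen.adjugate i j : ℤ) : ℚ) / A.clearDen.det := by
  have hD : (A.commonDen : ℚ) ≠ 0 := by exact_mod_cast A.commonDen_pos.ne'
  have hinv : ((A.commonDen : ℚ) • A)⁻¹ = (A.commonDen : ℚ)⁻¹ • A⁻¹ :=
    inv_eq_left_inv (by simp [smul_smul, hD, nonsing_inv_mul A hA])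
  rw [Int.cast_mul, mul_div_assoc, ← inv_map_intCast_apply, map_clearDen, hinv]
  simp [hD]

lemma abs_det_clearDen_le {A : Matrix n n ℚ} {h : ℕ} (hA : ∀ i j, (A i j).num.natAbs ≤ h) :
    |A.clearDen.det| ≤ (A.commonDen * h) ^ Fintype.card n * (Fintype.card n).factorial := by
  simpa [mul_comm] using det_le (abv := AbsoluteValue.abs) (abs_clearDen_le hA)

lemma abs_commonDen_mul_adjugate_clearDen_le {m : ℕ} {A : Matrix (Fin (m + 1)) (Fin (m + 1)) ℚ}
    {h : ℕ} (hh : 1 ≤ h) (hA : ∀ i j, (A i j).num.natAbs ≤ h) (i j : Fin (m + 1)) :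
    |A.commonDen * A.clearDen.adjugate i j| ≤ (A.commonDen * h) ^ (m + 1) * (m + 1).factorial := by
  have hadj : |A.clearDen.adjugate i j| ≤ m.factorial * (A.commonDen * h) ^ m := by
    simpa using abv_adjugate_le (abv := AbsoluteValue.abs) (abs_clearDen_le hA) i j
  have hfac : (m.factorial : ℤ) ≤ (m + 1).factorial := by
    exact_mod_cast Nat.factorial_le m.le_succ
  have hD : (A.commonDen : ℤ) ≤ A.commonDen * h :=
    le_mul_of_one_le_right (by positivity) (by exact_mod_cast hh)
  rw [abs_mul, Nat.abs_cast]
  calc (A.commonDen : ℤ) * |A.clearDen.adjugate i j|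
      ≤ A.commonDen * (m.factorial * (A.commonDen * h) ^ m) := by gcongr
    _ ≤ (A.commonDen * h) * ((m + 1).factorial * (A.commonDen * h) ^ m) := by gcongr
    _ = (A.commonDen * h) ^ (m + 1) * (m + 1).factorial := by ring

end Matrix

lemma mul_pow_le_pow_cube_add_sq {D h n : ℕ} (hh : 1 ≤ h) (hD : D ≤ h ^ (n * n)) :
    (D * h) ^ n ≤ h ^ (n ^ 3 + n ^ 2) :=
  calc (D * h) ^ n ≤ (h ^ (n * n) * h) ^ n := by gcongr
    _ = h ^ (n ^ 3 + n) := by ring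
    _ ≤ h ^ (n ^ 3 + n ^ 2) := pow_le_pow_right₀ hh (by nlinarith)

theorem stmt13_general (n : ℕ) (h : ℕ) (g : GL (Fin n) ℚ)
    (hg : ∀ i j, ratHeight ((g : Matrix (Fin n) (Fin n) ℚ) i j) ≤ h) :
    ∀ i j, ratHeight (((g⁻¹ : GL (Fin n) ℚ) : Matrix (Fin n) (Fin n) ℚ) i j) ≤
      h ^ (n ^ 3 + n ^ 2) * n.factorial := by
  intro i j
  obtain ⟨m, rfl⟩ := Nat.exists_eq_add_one_of_ne_zero i.pos.ne'
  set A := (g : Matrix (Fin (m + 1)) (Fin (m + 1)) ℚ)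
  have hh : 1 ≤ h := (A i i).pos.trans_le ((den_le_ratHeight _).trans (hg i i))
  have hnum : ∀ k l, (A k l).num.natAbs ≤ h := fun k l ↦ (natAbs_num_le_ratHeight _).trans (hg k l)
  have hD : A.commonDen ≤ h ^ ((m + 1) * (m + 1)) := by
    simpa using Matrix.commonDen_le_pow fun k l ↦ (den_le_ratHeight _).trans (hg k l)
  have hA : IsUnit A.det := (Matrix.isUnit_iff_isUnit_det A).mp g.isUnit
  have hbound : (A.commonDen * h : ℤ) ^ (m + 1) * (m + 1).factorial ≤
      h ^ ((m + 1) ^ 3 + (m + 1) ^ 2) * (m + 1).factorial := by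
    gcongr
    exact_mod_cast mul_pow_le_pow_cube_add_sq hh hD
  rw [Matrix.coe_units_inv, Matrix.inv_apply_eq_div_det_clearDen hA]
  refine (ratHeight_intCast_div_le (Matrix.det_clearDen_ne_zero hA.ne_zero)).trans
    (max_le ?_ ?_) <;> zify <;> refine le_trans ?_ hbound
  · exact Matrix.abs_commonDen_mul_adjugate_clearDen_le hh hnum i j
  · simpa using Matrix.abs_det_clearDen_le hnum

/-- **Height of the inverse matrix**: if `g ∈ GL_n(ℚ)` has entries of height at most `h`,
then every entry of `g⁻¹` has height at most `h^(n³+n²)·n!`. -/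
theorem stmt13 (n : ℕ) (hn : 1 ≤ n) (h : ℕ) (g : GL (Fin n) ℚ)
    (hg : ∀ i j, ratHeight ((g : Matrix (Fin n) (Fin n) ℚ) i j) ≤ h) :
    ∀ i j, ratHeight (((g⁻¹ : GL (Fin n) ℚ) : Matrix (Fin n) (Fin n) ℚ) i j) ≤
      h ^ (n ^ 3 + n ^ 2) * n.factorial :=
  stmt13_general n h g hg
end
end

section
/- Let n ≥ 1 and let f be a nonzero polynomial in the n² variables x_{ij} (1 ≤ i,j ≤ n) with coefficients in ℚ̄. If f vanishes at every n×n matrix over ℚ̄ of determinant 1 (i.e. f(M) = 0 for every M ∈ SL_n(ℚ̄)), then the total degree of f is at least n. -/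
/-!
If `deg f < n`, then for an invertible matrix `A` the one-variable polynomial `t ↦ f (t • A)` has
degree `< n` but vanishes at the `n` distinct `n`-th roots of `(det A)⁻¹`, since `det (t • A) =
tⁿ det A`; hence it is zero and `f (A) = 0`. So `det · f` vanishes everywhere, and as `det` is a
nonzero polynomial, `f = 0`.
-/

noncomputable section

open Finset

namespace MvPolynomial

variable {σ R : Type*}

theorem natDegree_eval₂_C_mul_X_le [CommSemiring R] (f : MvPolynomial σ R) (x : σ → R) :
    (f.eval₂ Polynomial.C fun i => Polynomial.C (x i) * Polynomial.X).natDegree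
      ≤ f.totalDegree := by
  rw [eval₂_eq]
  refine Polynomial.natDegree_sum_le_of_forall_le _ _ fun d hd => ?_
  refine (Polynomial.natDegree_C_mul_le _ _).trans <| (Polynomial.natDegree_prod_le _ _).trans ?_
  refine le_trans (sum_le_sum fun i _ => ?_) (le_totalDegree hd)
  calc ((Polynomial.C (x i) * Polynomial.X) ^ d i).natDegree
      ≤ d i * (Polynomial.C (x i) * Polynomial.X).natDegree := Polynomial.natDegree_pow_le
    _ ≤ d i * 1 := Nat.mul_le_mul_left _
      ((Polynomial.natDegree_C_mul_le _ _).trans Polynomial.natDegree_X_le)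
    _ = d i := mul_one _

theorem eval_eval₂_C_mul_X [CommSemiring R] (f : MvPolynomial σ R) (x : σ → R) (t : R) :
    (f.eval₂ Polynomial.C fun i => Polynomial.C (x i) * Polynomial.X).eval t
      = eval (t • x) f := by
  rw [polynomial_eval_eval₂]
  congr 1
  · ext; simp
  · ext i
    simp only [Polynomial.eval_mul, Polynomial.eval_C, Polynomial.eval_X, Pi.smul_apply,
      smul_eq_mul]
    exact mul_comm _ _

theorem eval_eq_zero_of_eval_smul_eq_zero [CommRing R] [IsDomain R] {f : MvPolynomial σ R}
    {x : σ → R} (S : Finset R) (hS : f.totalDegree < #S) (h : ∀ t ∈ S, eval (t • x) f = 0) :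
    eval x f = 0 := by
  have hline : (f.eval₂ Polynomial.C fun i => Polynomial.C (x i) * Polynomial.X) = 0 :=
    Polynomial.eq_zero_of_natDegree_lt_card_of_eval_eq_zero' _ S
      (fun t ht => (eval_eval₂_C_mul_X f x t).trans (h t ht))
      ((natDegree_eval₂_C_mul_X_le f x).trans_lt hS)
  simpa [hline] using (eval_eval₂_C_mul_X f x 1).symm

end MvPolynomial

open Polynomial

theorem IsAlgClosed.card_nthRootsFinset {K : Type*} [Field K] [IsAlgClosed K] {n : ℕ}
    [NeZero (n : K)] {a : K} (ha : a ≠ 0) : #(nthRootsFinset n a) = n := by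
  classical
  obtain ⟨ζ, hζ⟩ := HasEnoughRootsOfUnity.exists_primitiveRoot K n
  rw [nthRootsFinset_def, Multiset.toFinset_card_of_nodup (hζ.nthRoots_nodup ha),
    hζ.card_nthRoots, if_pos (IsAlgClosed.exists_pow_nat_eq a (NeZero.pos_of_neZero_natCast K))]

namespace Matrix

open MvPolynomial

variable {K m : Type*} [Field K] [Fintype m] [DecidableEq m]

theorem eval_eq_zero_of_det_ne_zero [IsAlgClosed K] [NeZero (Fintype.card m : K)]
    {f : MvPolynomial (m × m) K} (hdeg : f.totalDegree < Fintype.card m)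
    (hvan : ∀ M : Matrix m m K, M.det = 1 → eval (fun p => M p.1 p.2) f = 0)
    {A : Matrix m m K} (hA : A.det ≠ 0) : eval (fun p => A p.1 p.2) f = 0 := by
  refine eval_eq_zero_of_eval_smul_eq_zero (nthRootsFinset (Fintype.card m) A.det⁻¹) ?_ ?_
  · rwa [IsAlgClosed.card_nthRootsFinset (inv_ne_zero hA)]
  · intro t ht
    rw [mem_nthRootsFinset (NeZero.pos_of_neZero_natCast K)] at ht
    exact hvan (t • A) (by rw [det_smul, ht, inv_mul_cancel₀ hA])

theorem eq_zero_of_forall_det_ne_zero [Infinite K] {f : MvPolynomial (m × m) K}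
    (h : ∀ A : Matrix m m K, A.det ≠ 0 → eval (fun p => A p.1 p.2) f = 0) : f = 0 := by
  have hdet_mul : (mvPolynomialX m m K).det * f = 0 := by
    refine MvPolynomial.funext fun x => ?_
    let A : Matrix m m K := of fun i j => x (i, j)
    have hdet : eval x (mvPolynomialX m m K).det = A.det := by
      rw [RingHom.map_det, ← mvPolynomialX_mapMatrix_eval A]
      rfl
    rw [map_zero, map_mul, hdet]
    rcases eq_or_ne A.det 0 with hA | hA
    · rw [hA, zero_mul]
    · rw [show x = fun p => A p.1 p.2 from rfl, h A hA, mul_zero]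
  exact (mul_eq_zero.mp hdet_mul).resolve_left (det_mvPolynomialX_ne_zero m K)

end Matrix

theorem stmt16_general (n : ℕ) (f : MvPolynomial (Fin n × Fin n) Qbar)
    (hf : f ≠ 0)
    (hvan : ∀ M : Matrix (Fin n) (Fin n) Qbar, M.det = 1 →
      MvPolynomial.eval (fun p => M p.1 p.2) f = 0) :
    n ≤ f.totalDegree := by
  by_contra! hlt
  have : NeZero (Fintype.card (Fin n) : Qbar) :=
    ⟨by simpa using ((Nat.zero_le _).trans_lt hlt).ne'⟩
  exact hf <| Matrix.eq_zero_of_forall_det_ne_zero fun A hA =>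
    Matrix.eval_eq_zero_of_det_ne_zero (by simpa using hlt) hvan hA

/-- **Polynomials vanishing on `SL_n`**: if a nonzero polynomial `f` in the `n²` matrix
variables vanishes at every `n×n` matrix over `ℚ̄` of determinant `1`, then its total
degree is at least `n`. -/
theorem stmt16 (n : ℕ) (hn : 1 ≤ n) (f : MvPolynomial (Fin n × Fin n) Qbar)
    (hf : f ≠ 0)
    (hvan : ∀ M : Matrix (Fin n) (Fin n) Qbar, M.det = 1 →
      MvPolynomial.eval (fun p => M p.1 p.2) f = 0) :
    n ≤ f.totalDegree :=
  stmt16_general n f hf hvan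
end
end

section
/- For every p ≥ 1, every finite subgroup of GL_p(ℚ) has order at most (2p)!. -/
/-!
Let `N = |H|`. Every `g ∈ H` satisfies `g ^ N = 1`, so its eigenvalues are roots of unity; hence
`tr g` is a rational algebraic integer, i.e. an integer `t(g)` with `|t(g)| ≤ p`, and `t(g) = p`
forces all eigenvalues to be `1`, which for the semisimple `g` means `g = 1`.
Averaging the Kronecker powers `g ^ ⊗m` over `H` gives `N` times an idempotent, whose trace is a
rank, so `N ∣ ∑_g t(g) ^ m` for every `m`, hence `N ∣ ∑_g f(t(g))` for every `f ∈ ℤ[X]`.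
For `f(x) = (x + p)(x + p - 1) ⋯ (x - p + 1)` every term except `f(t(1)) = (2p)!` vanishes.
-/

open Polynomial
open scoped MatrixGroups

theorem spectrum.pow_eq_one_of_mem {𝕜 A : Type*} [Field 𝕜] [Ring A] [Algebra 𝕜 A] {a : A} {n : ℕ}
    (ha : a ^ n = 1) {μ : 𝕜} (hμ : μ ∈ spectrum 𝕜 a) : μ ^ n = 1 := by
  rcases subsingleton_or_nontrivial A with hA | hA
  · simp [spectrum.of_subsingleton] at hμ
  · simpa [ha, spectrum.one_eq] using spectrum.pow_mem_pow a n hμ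

theorem Multiset.norm_sum_le_card {E : Type*} [SeminormedAddCommGroup E] {s : Multiset E}
    (hs : ∀ z ∈ s, ‖z‖ ≤ 1) : ‖s.sum‖ ≤ Multiset.card s := by
  simpa using (norm_multiset_sum_le s).trans (Multiset.sum_le_card_nsmul _ 1 (by simpa using hs))

theorem Complex.eq_one_of_sum_eq_card {s : Multiset ℂ} (hs : ∀ z ∈ s, ‖z‖ ≤ 1)
    (hsum : s.sum = Multiset.card s) {z : ℂ} (hz : z ∈ s) : z = 1 := by
  obtain ⟨t, rfl⟩ := Multiset.exists_cons_of_mem hz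
  have hz1 : ‖z‖ ≤ 1 := hs z (Multiset.mem_cons_self z t)
  have ht : ‖t.sum‖ ≤ Multiset.card t :=
    Multiset.norm_sum_le_card fun w hw => hs w (Multiset.mem_cons_of_mem hw)
  have hre : 1 ≤ z.re := by
    have := congrArg Complex.re hsum
    simp only [Multiset.sum_cons, Multiset.card_cons, Complex.add_re, Nat.cast_add, Nat.cast_one,
      Complex.natCast_re, Complex.one_re] at this
    linarith [Complex.re_le_norm t.sum]
  have him : z.im = 0 := by
    have := Complex.sq_norm z
    rw [Complex.normSq_apply] at this
    nlinarith [Complex.re_le_norm z, norm_nonneg z]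
  exact Complex.ext (le_antisymm ((Complex.re_le_norm z).trans hz1) hre) him

namespace Matrix

section KroneckerPow

variable {R ι : Type*} [CommSemiring R] [Fintype ι] (κ : Type*) [Fintype κ] [DecidableEq κ]

def kroneckerPow (A : Matrix ι ι R) : Matrix (κ → ι) (κ → ι) R :=
  of fun i j => ∏ k, A (i k) (j k)

theorem kroneckerPow_mul (A B : Matrix ι ι R) :
    kroneckerPow κ (A * B) = kroneckerPow κ A * kroneckerPow κ B := by
  ext i j
  simp only [kroneckerPow, mul_apply, of_apply, Finset.prod_univ_sum, Fintype.piFinset_univ,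
    Finset.prod_mul_distrib]

theorem trace_kroneckerPow (A : Matrix ι ι R) :
    (kroneckerPow κ A).trace = A.trace ^ Fintype.card κ := by
  simp only [trace, diag, kroneckerPow, of_apply]
  rw [← Finset.card_univ (α := κ), ← Finset.prod_const, Finset.prod_univ_sum, Fintype.piFinset_univ]

@[simps]
def kroneckerPowHom : Matrix ι ι R →ₙ* Matrix (κ → ι) (κ → ι) R where
  toFun := kroneckerPow κ
  map_mul' := kroneckerPow_mul κ

end KroneckerPow

section

variable {ι K : Type*} [Fintype ι] [DecidableEq ι] [Field K] {n : ℕ}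

theorem pow_eq_one_of_mem_roots_charpoly {A : Matrix ι ι K} (hA : A ^ n = 1)
    {μ : K} (hμ : μ ∈ A.charpoly.roots) : μ ^ n = 1 :=
  spectrum.pow_eq_one_of_mem hA (mem_spectrum_iff_isRoot_charpoly.2 (isRoot_of_mem_roots hμ))

theorem card_roots_charpoly [IsAlgClosed K] (A : Matrix ι ι K) :
    Multiset.card A.charpoly.roots = Fintype.card ι := by
  rw [IsAlgClosed.card_roots_eq_natDegree, charpoly_natDegree_eq_dim]

theorem isIntegral_trace_of_pow_eq_one [IsAlgClosed K] {A : Matrix ι ι K}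
    (hA : A ^ n = 1) (hn : n ≠ 0) : IsIntegral ℤ A.trace := by
  rw [trace_eq_sum_roots_charpoly]
  exact IsIntegral.multiset_sum fun μ hμ =>
    ⟨X ^ n - 1, monic_X_pow_sub_C 1 hn, by simp [pow_eq_one_of_mem_roots_charpoly hA hμ]⟩

theorem eq_one_of_pow_eq_one_of_charpoly_eq {A : Matrix ι ι K}
    (hA : A ^ n = 1) (hn : (n : K) ≠ 0) (hχ : A.charpoly = (X - 1) ^ Fintype.card ι) : A = 1 := by
  rcases isEmpty_or_nonempty ι with hι | hι
  · exact Subsingleton.elim _ _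
  have hsq : Squarefree (minpoly K A) :=
    ((separable_X_pow_sub_C 1 hn one_ne_zero).of_dvd (minpoly.dvd K A (by simp [hA]))).squarefree
  have hdvd : minpoly K A ∣ X - 1 :=
    (hsq.dvd_pow_iff_dvd Fintype.card_ne_zero).1 (hχ ▸ minpoly.dvd K A (aeval_self_charpoly A))
  simpa [sub_eq_zero] using aeval_eq_zero_of_dvd_aeval_eq_zero hdvd (minpoly.aeval K A)

theorem charpoly_eq_of_forall_mem_roots_eq [IsAlgClosed K] {A : Matrix ι ι K}
    {c : K} (h : ∀ μ ∈ A.charpoly.roots, μ = c) : A.charpoly = (X - C c) ^ Fintype.card ι := by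
  have hroots : A.charpoly.roots = Multiset.replicate (Fintype.card ι) c :=
    Multiset.eq_replicate.2 ⟨card_roots_charpoly A, h⟩
  rw [(IsAlgClosed.splits _).eq_prod_roots_of_monic (charpoly_monic A), hroots,
    Multiset.map_replicate, Multiset.prod_replicate]

theorem norm_trace_le_of_pow_eq_one {A : Matrix ι ι ℂ} (hA : A ^ n = 1) (hn : n ≠ 0) :
    ‖A.trace‖ ≤ Fintype.card ι := by
  rw [trace_eq_sum_roots_charpoly, ← card_roots_charpoly A]
  exact Multiset.norm_sum_le_card fun μ hμ =>
    (Complex.norm_eq_one_of_pow_eq_one (pow_eq_one_of_mem_roots_charpoly hA hμ) hn).le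

theorem eq_one_of_pow_eq_one_of_trace_eq_card {A : Matrix ι ι ℂ} (hA : A ^ n = 1) (hn : n ≠ 0)
    (htr : A.trace = Fintype.card ι) : A = 1 := by
  refine eq_one_of_pow_eq_one_of_charpoly_eq hA (Nat.cast_ne_zero.2 hn) ?_
  rw [← C_1]
  refine charpoly_eq_of_forall_mem_roots_eq fun μ hμ => Complex.eq_one_of_sum_eq_card ?_ ?_ hμ
  · exact fun ν hν =>
      (Complex.norm_eq_one_of_pow_eq_one (pow_eq_one_of_mem_roots_charpoly hA hν) hn).le
  · rw [← trace_eq_sum_roots_charpoly, htr, card_roots_charpoly]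

theorem exists_int_trace_of_pow_eq_one {A : Matrix ι ι ℚ} (hA : A ^ n = 1) (hn : n ≠ 0) :
    ∃ t : ℤ, A.trace = t ∧ |t| ≤ Fintype.card ι ∧ (t = Fintype.card ι ↔ A = 1) := by
  set B := (algebraMap ℚ ℂ).mapMatrix A
  have hB : B ^ n = 1 := by rw [← map_pow, hA, map_one]
  have htrB : B.trace = A.trace := (AddMonoidHom.map_trace (algebraMap ℚ ℂ) A).symm
  obtain ⟨t, ht⟩ := IsIntegrallyClosed.isIntegral_iff.1 <|
    (isIntegral_algebraMap_iff (algebraMap ℚ ℂ).injective).1 <|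
      htrB ▸ isIntegral_trace_of_pow_eq_one hB hn
  have htC : B.trace = t := by rw [htrB, ← ht]; simp
  have hbound : |(t : ℝ)| ≤ Fintype.card ι := by
    simpa [htC] using norm_trace_le_of_pow_eq_one hB hn
  refine ⟨t, by simp [← ht], by exact_mod_cast hbound, fun htι => ?_, fun h1 => ?_⟩
  · refine Matrix.map_injective (algebraMap ℚ ℂ).injective ?_
    exact (eq_one_of_pow_eq_one_of_trace_eq_card hB hn (by simp [htC, htι])).trans
      (Matrix.map_one _ (map_zero _) (map_one _)).symm
  · exact_mod_cast (by simpa [h1] using ht : (t : ℚ) = Fintype.card ι)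

theorem trace_eq_finrank_range_of_isIdempotentElem {E : Matrix ι ι K} (hE : IsIdempotentElem E) :
    E.trace = Module.finrank K (LinearMap.range E.toLin') := by
  rw [← trace_toLin'_eq]
  exact (LinearMap.IsIdempotentElem.isProj_range _ (hE.map toLinAlgEquiv')).trace

theorem exists_sum_trace_eq_card_mul {G : Type*} [Group G] [Fintype G] [CharZero K]
    (ρ : G →ₙ* Matrix ι ι K) :
    ∃ k : ℕ, ∑ g, (ρ g).trace = Fintype.card G * k := by
  set S := ∑ g, ρ g
  have hS : S * S = Fintype.card G • S := by
    have hshift (g : G) : ∑ h, ρ (g * h) = S := Equiv.sum_comp (Equiv.mulLeft g) ρ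
    simp only [S, Finset.sum_mul_sum, ← map_mul] at hshift ⊢
    simp only [hshift, Finset.sum_const, Finset.card_univ]
  have hN : (Fintype.card G : K) ≠ 0 := Nat.cast_ne_zero.2 Fintype.card_ne_zero
  have hE : IsIdempotentElem ((Fintype.card G : K)⁻¹ • S) := by
    rw [IsIdempotentElem, smul_mul_smul_comm, hS, ← Nat.cast_smul_eq_nsmul K, smul_smul, mul_assoc,
      inv_mul_cancel₀ hN, mul_one]
  refine ⟨Module.finrank K (LinearMap.range ((Fintype.card G : K)⁻¹ • S).toLin'), ?_⟩
  rw [← trace_eq_finrank_range_of_isIdempotentElem hE, trace_smul, smul_eq_mul,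
    mul_inv_cancel_left₀ hN, trace_sum]

end

end Matrix

theorem Finset.dvd_sum_eval_of_dvd_sum_pow {R ι : Type*} [CommSemiring R] (s : Finset ι)
    (t : ι → R) {N : R} (h : ∀ m, N ∣ ∑ i ∈ s, t i ^ m) (f : R[X]) :
    N ∣ ∑ i ∈ s, f.eval (t i) := by
  simp_rw [eval_eq_sum_range]
  rw [Finset.sum_comm]
  exact Finset.dvd_sum fun k _ => by rw [← Finset.mul_sum]; exact dvd_mul_of_dvd_right (h k) _

open Nat in
theorem Finset.dvd_factorial_of_dvd_sum_pow {ι : Type*} (s : Finset ι) {i₀ : ι} (hi₀ : i₀ ∈ s)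
    (t : ι → ℤ) (p : ℕ) {N : ℤ} (hbound : ∀ i ∈ s, |t i| ≤ p) (hmax : ∀ i ∈ s, t i = p ↔ i = i₀)
    (hN : ∀ m, N ∣ ∑ i ∈ s, t i ^ m) : N ∣ (2 * p)! := by
  set P := (descPochhammer ℤ (2 * p)).comp (X + C (p : ℤ))
  have heval (i) (hi : i ∈ s) : P.eval (t i) = ((t i + p).toNat.descFactorial (2 * p) : ℤ) := by
    rw [eval_comp, eval_add, eval_X, eval_C, ← descPochhammer_eval_eq_descFactorial,
      Int.toNat_of_nonneg (by linarith [abs_le.1 (hbound i hi)])]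
  have hP := s.dvd_sum_eval_of_dvd_sum_pow t hN P
  rwa [Finset.sum_eq_single_of_mem i₀ hi₀ fun i hi hne => ?_, heval i₀ hi₀, (hmax i₀ hi₀).2 rfl,
    show ((p : ℤ) + p).toNat = 2 * p by omega, descFactorial_self] at hP
  have hlt : (t i + p).toNat < 2 * p := by
    have := (hmax i hi).not.2 hne
    have := abs_le.1 (hbound i hi)
    omega
  rw [heval i hi, descFactorial_eq_zero_iff_lt.2 hlt, cast_zero]

theorem stmt18_general (p : ℕ) (H : Subgroup (GL (Fin p) ℚ))
    (hH : (H : Set (GL (Fin p) ℚ)).Finite) :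
    Nat.card H ≤ (2 * p).factorial := by
  have : Finite H := hH.to_subtype
  have : Fintype H := Fintype.ofFinite H
  let ρ : H →* Matrix (Fin p) (Fin p) ℚ := (Units.coeHom _).comp H.subtype
  have hρ : Function.Injective ρ := fun _ _ h => Subtype.ext (Units.ext h)
  choose t ht using fun g : H => Matrix.exists_int_trace_of_pow_eq_one
    (by rw [← map_pow, pow_card_eq_one, map_one] : ρ g ^ Fintype.card H = 1) Fintype.card_ne_zero
  have hpow (m : ℕ) : (Fintype.card H : ℤ) ∣ ∑ g, t g ^ m := by
    obtain ⟨k, hk⟩ :=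
      Matrix.exists_sum_trace_eq_card_mul ((Matrix.kroneckerPowHom (Fin m)).comp ρ.toMulHom)
    simp only [MulHom.comp_apply, MulHom.coe_mk, OneHom.toFun_eq_coe, MonoidHom.toOneHom_coe,
      Matrix.kroneckerPowHom_apply, Matrix.trace_kroneckerPow, (ht _).1, Fintype.card_fin] at hk
    exact ⟨k, by exact_mod_cast hk⟩
  rw [Nat.card_eq_fintype_card]
  refine Nat.le_of_dvd (Nat.factorial_pos _) (Int.natCast_dvd_natCast.1 ?_)
  refine Finset.univ.dvd_factorial_of_dvd_sum_pow (Finset.mem_univ 1) t p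
    (fun g _ => by simpa using (ht g).2.1) (fun g _ => ?_) hpow
  simpa using (ht g).2.2.trans (hρ.eq_iff' (map_one ρ))

/-- **Order of finite subgroups of `GL_p(ℚ)`**: for every `p ≥ 1`, every finite subgroup
of `GL_p(ℚ)` has order at most `(2p)!`. -/
theorem stmt18 (p : ℕ) (hp : 1 ≤ p) (H : Subgroup (GL (Fin p) ℚ))
    (hH : (H : Set (GL (Fin p) ℚ)).Finite) :
    Nat.card H ≤ (2 * p).factorial :=
  stmt18_general p H hH
end

section
/- For every n ≥ 1, the Zariski closure of SL_n(ℤ) in GL_n(ℚ̄) equals SL_n(ℚ̄); that is, the smallest algebraic subset of ℚ̄^{n²+1} containing {(M,1) : M ∈ SL_n(ℤ)} is {(M,1) : M ∈ GL_n(ℚ̄), det(M) = 1}. -/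
noncomputable section

open scoped MatrixGroups
open MvPolynomial

/-!
Let `H` be the set of matrices `M` such that every polynomial in the matrix entries vanishing on
`SL_n(ℤ)` vanishes at `M`; the Zariski closure of `SL_n(ℤ)` inside the hyperplane `y = 1` is `H`.
`H` is closed under multiplication: for `A ∈ SL_n(ℤ)` the polynomial `M ↦ f (M * A)` again
vanishes on `SL_n(ℤ)`, which gives `H * SL_n(ℤ) ⊆ H`, and then `M ↦ f (B * M)` for `B ∈ H`
gives `H * H ⊆ H`. `H` contains every transvection `1 + c E_ij`, since `c ↦ f (1 + c E_ij)` is a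
one-variable polynomial vanishing on `ℤ`. Over a field the transvections generate `SL_n`, so
`H` contains `SL_n(ℚ̄)`; conversely `det - 1` vanishes on `SL_n(ℤ)`.
-/

open MvPolynomial

namespace Matrix

theorem map_transvection {ι R S : Type*} [DecidableEq ι] [CommRing R] [CommRing S]
    (φ : R →+* S) (i j : ι) (c : R) :
    (transvection i j c).map φ = transvection i j (φ c) := by
  ext p q
  simp only [transvection, map_apply, Matrix.add_apply, one_apply, single_apply]
  split_ifs <;> simp_all

section Generation

variable {ι K : Type*} [Fintype ι] [DecidableEq ι] [Field K]

/- `E_ji(1) · diag(a, a⁻¹)` has `(j, i)`-entry `a ≠ 0`, and a `2 × 2` matrix `[[p, q], [r, s]]` of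
determinant one with `r ≠ 0` equals `E_ij((p - 1)/r) · E_ji(r) · E_ij((s - 1)/r)`. -/
theorem SpecialLinearGroup.coe_diag2n_eq_transvection_mul {i j : ι} (hij : i ≠ j) {a : K}
    (ha : a ≠ 0) :
    (SpecialLinearGroup.diag2n hij a ha : Matrix ι ι K) =
      Matrix.transvection j i (-1) * Matrix.transvection i j (1 - a⁻¹) *
        Matrix.transvection j i a * Matrix.transvection i j (a⁻¹ * a⁻¹ - a⁻¹) := by
  rw [diag2n_coe]
  simp only [Matrix.transvection, add_mul, mul_add, one_mul, mul_one, single_mul_single_same,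
    single_mul_single_of_ne _ _ _ _ hij, single_mul_single_of_ne _ _ _ _ hij.symm, add_zero]
  ext p q
  simp only [Matrix.add_apply, one_apply, single_apply, diagonal_apply]
  split_ifs <;> grind

theorem mem_closure_transvection_of_det_eq_one {M : Matrix ι ι K} (hM : M.det = 1) :
    M ∈ Submonoid.closure (Set.range TransvectionStruct.toMatrix) := by
  set H := Submonoid.closure (Set.range (TransvectionStruct.toMatrix (n := ι) (R := K)))
  have htransvec (i j : ι) (hij : i ≠ j) (c : K) : transvection i j c ∈ H :=
    Submonoid.subset_closure ⟨⟨i, j, hij, c⟩, rfl⟩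
  have hdiag2n {i j : ι} (hij : i ≠ j) {a : K} (ha : a ≠ 0) :
      (SpecialLinearGroup.diag2n hij a ha : Matrix ι ι K) ∈ H := by
    rw [SpecialLinearGroup.coe_diag2n_eq_transvection_mul hij ha]
    exact H.mul_mem (H.mul_mem (H.mul_mem (htransvec _ _ hij.symm _) (htransvec _ _ hij _))
      (htransvec _ _ hij.symm _)) (htransvec _ _ hij _)
  refine diagonal_transvection_induction (· ∈ H) M (fun D hD => ?_)
    (fun t => Submonoid.subset_closure ⟨t, rfl⟩) (fun _ _ => H.mul_mem)
  rw [hM] at hD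
  obtain hι | ⟨⟨i₀⟩⟩ := isEmpty_or_nonempty ι
  · exact Subsingleton.elim (α := Matrix ι ι K) 1 (diagonal D) ▸ H.one_mem
  have : (⟨diagonal D, hD⟩ : SpecialLinearGroup ι K) ∈ H.comap SpecialLinearGroup.coeMonoidHom := by
    rw [SpecialLinearGroup.diag_eq_diag2n_prod i₀ D hD]
    refine Submonoid.noncommProd_mem (H.comap SpecialLinearGroup.coeMonoidHom) _ _ _ fun i hi => ?_
    have hi : i ≠ i₀ := (Finset.mem_filter.1 hi).2
    rw [dif_pos hi]
    exact hdiag2n hi (SpecialLinearGroup.diagonal_neZero D hD i)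
  exact this

end Generation

section ZariskiHull

variable {ι K : Type*} [CommRing K]

def zariskiHull (S : Set (Matrix ι ι K)) : Set (Matrix ι ι K) :=
  {M | ∀ f : MvPolynomial (ι × ι) K,
    (∀ A ∈ S, eval (fun p => A p.1 p.2) f = 0) → eval (fun p => M p.1 p.2) f = 0}

theorem subset_zariskiHull (S : Set (Matrix ι ι K)) : S ⊆ zariskiHull S :=
  fun M hM _ hf => hf M hM

theorem transvection_mem_zariskiHull [DecidableEq ι] [IsDomain K] [CharZero K]
    {S : Set (Matrix ι ι K)} {i j : ι} (hS : ∀ k : ℤ, transvection i j (k : K) ∈ S) (c : K) :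
    transvection i j c ∈ zariskiHull S := by
  intro f hf
  set F : Polynomial K := aeval (fun p => transvection i j (Polynomial.X : Polynomial K) p.1 p.2) f
  have hF (t : K) : F.eval t = eval (fun p => transvection i j t p.1 p.2) f := by
    have hpt : (fun p : ι × ι =>
        Polynomial.aeval t (transvection i j (Polynomial.X : Polynomial K) p.1 p.2)) =
          fun p => transvection i j t p.1 p.2 := by
      funext p
      simpa using congrFun₂ (map_transvection (Polynomial.evalRingHom t) i j Polynomial.X) p.1 p.2
    rw [← Polynomial.coe_aeval_eq_eval, ← AlgHom.comp_apply, comp_aeval, hpt]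
    rfl
  have hF0 : F = 0 := Polynomial.eq_zero_of_infinite_isRoot F <|
    Set.infinite_of_injective_forall_mem Int.cast_injective fun k : ℤ => by
      simpa [Polynomial.IsRoot, hF] using hf _ (hS k)
  simpa [hF0] using (hF c).symm

variable [Fintype ι]

/-- The polynomial `M ↦ f (A * M * B)`. -/
def precompMul (A B : Matrix ι ι K) (f : MvPolynomial (ι × ι) K) : MvPolynomial (ι × ι) K :=
  bind₁ (fun p => ∑ r, ∑ s, C (A p.1 r * B s p.2) * X (r, s)) f

theorem eval_precompMul (A B M : Matrix ι ι K) (f : MvPolynomial (ι × ι) K) :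
    eval (fun p => M p.1 p.2) (precompMul A B f) = eval (fun p => (A * M * B) p.1 p.2) f := by
  refine (eval₂Hom_bind₁ (RingHom.id K) _ _ f).trans (congrArg (eval · f) (funext fun p => ?_))
  simp only [map_sum, coe_eval₂Hom, eval₂_mul, eval₂_C, eval₂_X, RingHom.id_apply, mul_apply,
    Finset.mul_sum, mul_comm, mul_left_comm]
  exact Finset.sum_comm

variable [DecidableEq ι]

theorem mul_mem_zariskiHull (S : Submonoid (Matrix ι ι K)) {M N : Matrix ι ι K}
    (hM : M ∈ zariskiHull S) (hN : N ∈ zariskiHull S) : M * N ∈ zariskiHull S := by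
  have mul_right (A : Matrix ι ι K) (hA : A ∈ S) : M * A ∈ zariskiHull S := fun f hf => by
    simpa [eval_precompMul] using
      hM (precompMul 1 A f) fun B hB => by simpa [eval_precompMul] using hf _ (S.mul_mem hB hA)
  intro f hf
  simpa [eval_precompMul] using
    hN (precompMul M 1 f) fun B hB => by simpa [eval_precompMul] using mul_right B hB f hf

def zariskiHullSubmonoid (S : Submonoid (Matrix ι ι K)) : Submonoid (Matrix ι ι K) where
  carrier := zariskiHull S
  mul_mem' := mul_mem_zariskiHull S
  one_mem' := subset_zariskiHull (S : Set (Matrix ι ι K)) S.one_mem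

theorem zariskiHull_subset_setOf_det_eq_one {S : Set (Matrix ι ι K)} (hS : ∀ A ∈ S, A.det = 1) :
    zariskiHull S ⊆ {M | M.det = 1} := by
  intro M hM
  have hdet (A : Matrix ι ι K) :
      eval (fun p => A p.1 p.2) ((mvPolynomialX ι ι K).det - 1) = A.det - 1 := by
    rw [map_sub, eval_det_mvPolynomialX, map_one]
    rfl
  rw [Set.mem_ofPred_eq, ← sub_eq_zero, ← hdet]
  exact hM _ fun A hA => by rw [hdet, hS A hA, sub_self]

end ZariskiHull

section IntegerPoints

variable (ι K : Type*) [Fintype ι] [DecidableEq ι] [Field K]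

def integerSL : Submonoid (Matrix ι ι K) where
  carrier := {M | ∃ A : Matrix ι ι ℤ, A.det = 1 ∧ A.map (Int.cast : ℤ → K) = M}
  one_mem' := ⟨1, det_one, Matrix.map_one _ Int.cast_zero Int.cast_one⟩
  mul_mem' := by
    rintro _ _ ⟨A, hA, rfl⟩ ⟨B, hB, rfl⟩
    exact ⟨A * B, by rw [det_mul, hA, hB, one_mul], Matrix.map_mul (f := Int.castRingHom K)⟩

theorem zariskiHull_integerSL [CharZero K] :
    zariskiHull (integerSL ι K : Set (Matrix ι ι K)) = {M | M.det = 1} := by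
  refine (zariskiHull_subset_setOf_det_eq_one ?_).antisymm fun M hM => ?_
  · rintro _ ⟨A, hA, rfl⟩
    rw [show A.map Int.cast = (Int.castRingHom K).mapMatrix A from rfl, ← RingHom.map_det, hA,
      map_one]
  · show M ∈ zariskiHullSubmonoid (integerSL ι K)
    refine (Submonoid.closure_le.2 ?_ : _ ≤ zariskiHullSubmonoid (integerSL ι K))
      (mem_closure_transvection_of_det_eq_one hM)
    rintro _ ⟨t, rfl⟩
    refine transvection_mem_zariskiHull (fun k => ?_) t.c
    exact ⟨transvection t.i t.j k, det_transvection_of_ne _ _ t.hij k,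
      by simpa using map_transvection (Int.castRingHom K) t.i t.j k⟩

end IntegerPoints

end Matrix

theorem mem_zariskiClosure_iff {n : ℕ} (S : Set (Matrix (Fin n) (Fin n) Qbar))
    (a : glIdx n → Qbar) :
    a ∈ zariskiClosure {b | ∃ A ∈ S, b = Sum.elim (fun p => A p.1 p.2) (fun _ => 1)} ↔
      pointMatrix a ∈ Matrix.zariskiHull S ∧ a (Sum.inr ()) = 1 := by
  constructor
  · intro ha
    refine ⟨fun f hf => ?_, ?_⟩
    · have := ha (rename Sum.inl f) (by rintro _ ⟨A, hA, rfl⟩; rw [eval_rename]; exact hf A hA)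
      rwa [eval_rename] at this
    · have := ha (X (Sum.inr ()) - 1) (by rintro _ ⟨A, hA, rfl⟩; simp)
      simpa [sub_eq_zero] using this
  · rintro ⟨hM, ha⟩ f hf
    have hsub (b : Fin n × Fin n → Qbar) :
        eval b (bind₁ (Sum.elim X fun _ => 1) f) = eval (Sum.elim b fun _ => 1) f := by
      refine (eval₂Hom_bind₁ (RingHom.id Qbar) _ _ f).trans (congrArg (eval · f) ?_)
      funext x
      cases x <;> simp
    have ha' : a = Sum.elim (fun p => pointMatrix a p.1 p.2) (fun _ => 1) := by
      funext x
      cases x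
      · rfl
      · exact ha
    rw [ha', ← hsub]
    exact hM _ fun A hA => by rw [hsub]; exact hf _ ⟨A, hA, rfl⟩

theorem stmt19_general (n : ℕ) :
    zariskiClosure {a : glIdx n → Qbar |
        ∃ M : Matrix (Fin n) (Fin n) ℤ, M.det = 1 ∧
          a = Sum.elim (fun p => ((M p.1 p.2 : ℤ) : Qbar)) (fun _ => 1)} =
      {a : glIdx n → Qbar | (pointMatrix a).det = 1 ∧ a (Sum.inr ()) = 1} := by
  have hY : {a : glIdx n → Qbar | ∃ M : Matrix (Fin n) (Fin n) ℤ, M.det = 1 ∧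
        a = Sum.elim (fun p => ((M p.1 p.2 : ℤ) : Qbar)) (fun _ => 1)} =
      {b | ∃ A ∈ Matrix.integerSL (Fin n) Qbar,
        b = Sum.elim (fun p => A p.1 p.2) (fun _ => 1)} := by
    ext b
    constructor
    · rintro ⟨M, hM, rfl⟩
      exact ⟨_, ⟨M, hM, rfl⟩, rfl⟩
    · rintro ⟨_, ⟨M, hM, rfl⟩, rfl⟩
      exact ⟨M, hM, rfl⟩
  ext a
  rw [hY]
  exact (mem_zariskiClosure_iff _ a).trans (by rw [Matrix.zariskiHull_integerSL]; rfl)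

/-- **Zariski closure of `SL_n(ℤ)`**: for every `n ≥ 1`, the smallest algebraic subset of
`ℚ̄^{n²+1}` containing `{(M,1) : M ∈ SL_n(ℤ)}` equals
`{(M,1) : M ∈ GL_n(ℚ̄), det M = 1}`. -/
theorem stmt19 (n : ℕ) (hn : 1 ≤ n) :
    zariskiClosure {a : glIdx n → Qbar |
        ∃ M : Matrix (Fin n) (Fin n) ℤ, M.det = 1 ∧
          a = Sum.elim (fun p => ((M p.1 p.2 : ℤ) : Qbar)) (fun _ => 1)} =
      {a : glIdx n → Qbar | (pointMatrix a).det = 1 ∧ a (Sum.inr ()) = 1} :=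
  stmt19_general n
end
end
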